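/- Let λ be an antidominant composition with exactly s ≥ 1 nonzero parts (λ_1 = ⋯ = λ_{n−s} = 0 < λ_{n−s+1}), let ν = (0,…,0,λ_{n−s+1}+1,…,λ_n+1), and let 0 ≤ r ≤ s. Then for every k ∈ ℤ_{≥0}^n, as Laurent polynomials in q: c^ν_{(n−s+1,…,n)}(k_1,…,k_{n−s}, k_{n−s+1}+1,…,k_n+1) = q^{(λ_{n−r+1}+⋯+λ_n)−(k_{n−r+1}+⋯+k_n)} · c^ν_{(n−s+r+1,…,n,1,…,r)}(k_{n−r+1}+1,…,k_n+1, k_1,…,k_{n−s}, k_{n−s+1}+1,…,k_{n−r}+1), where the subscript (n−s+r+1,…,n,1,…,r) is the tuple listing n−s+r+1,…,n followed by 1,…,r. -/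
import Mathlib



open Finset

namespace CO

/-- The column diagram `dg'(λ)` of a composition, as a finset of boxes `(i, j)`,
`1 ≤ i ≤ n`, `1 ≤ j ≤ λ_i`. -/
def dgF (n : ℕ) (lam : ℕ → ℕ) : Finset (ℕ × ℕ) :=
  (Finset.Icc 1 n).biUnion fun i => (Finset.Icc 1 (lam i)).image fun j => (i, j)

/-- The augmented diagram `d̂g(λ)`: one extra box `(i, 0)` below each column. -/
def augF (n : ℕ) (lam : ℕ → ℕ) : Finset (ℕ × ℕ) :=
  dgF n lam ∪ (Finset.Icc 1 n).image fun i => (i, 0)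

/-- The box `d(u)` directly below a box. -/
def dbox (u : ℕ × ℕ) : ℕ × ℕ := (u.1, u.2 - 1)

/-- The augmented filling `σ̂`: equal to `σ` on positive rows and to `i` on `(i, 0)`. -/
def aug (σ : ℕ × ℕ → ℕ) (u : ℕ × ℕ) : ℕ := if u.2 = 0 then u.1 else σ u

/-- A filling takes values in `{1, …, n}` on the diagram. -/
def IsFilling (n : ℕ) (lam : ℕ → ℕ) (σ : ℕ × ℕ → ℕ) : Prop :=
  ∀ u ∈ dgF n lam, 1 ≤ σ u ∧ σ u ≤ n

/-- Attacking boxes: same row, or consecutive rows with the lower box to the right. -/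
def Attack (u v : ℕ × ℕ) : Prop :=
  u ≠ v ∧ (u.2 = v.2 ∨ (u.2 = v.2 + 1 ∧ u.1 < v.1) ∨ (v.2 = u.2 + 1 ∧ v.1 < u.1))

/-- A non-attacking filling: `σ̂` takes distinct values on attacking pairs of the
augmented diagram. -/
def NonAttacking (n : ℕ) (lam : ℕ → ℕ) (σ : ℕ × ℕ → ℕ) : Prop :=
  ∀ u ∈ augF n lam, ∀ v ∈ augF n lam, Attack u v → aug σ u ≠ aug σ v

/-- The arm of a box `u`. -/
def armF (n : ℕ) (lam : ℕ → ℕ) (u : ℕ × ℕ) : Finset (ℕ × ℕ) :=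
  ((dgF n lam).filter fun v => v.1 < u.1 ∧ v.2 = u.2 ∧ lam v.1 ≤ lam u.1) ∪
    ((augF n lam).filter fun v => u.1 < v.1 ∧ v.2 + 1 = u.2 ∧ lam v.1 < lam u.1)

/-- `a(u) = |arm(u)|`. -/
def armCard (n : ℕ) (lam : ℕ → ℕ) (u : ℕ × ℕ) : ℕ := (armF n lam u).card

/-- The number of inversions of `σ̂`: attacking pairs `u, u'` with `σ̂(u) < σ̂(u')`
and (same row with `u` to the left, or `u'` one row above `u` strictly to the left). -/
def invCard (n : ℕ) (lam : ℕ → ℕ) (σ : ℕ × ℕ → ℕ) : ℕ :=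
  ((augF n lam ×ˢ augF n lam).filter fun p =>
    aug σ p.1 < aug σ p.2 ∧
      ((p.1.2 = p.2.2 ∧ p.1.1 < p.2.1) ∨ (p.2.2 = p.1.2 + 1 ∧ p.2.1 < p.1.1))).card

/-- The descent set of `σ̂`. -/
def desF (n : ℕ) (lam : ℕ → ℕ) (σ : ℕ × ℕ → ℕ) : Finset (ℕ × ℕ) :=
  (dgF n lam).filter fun u => aug σ (dbox u) < aug σ u

/-- The statistic `coinv(σ̂)` (as an integer). -/
def coinv (n : ℕ) (lam : ℕ → ℕ) (σ : ℕ × ℕ → ℕ) : ℤ :=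
  (∑ u ∈ dgF n lam, (armCard n lam u : ℤ)) - invCard n lam σ +
    (((Finset.Icc 1 n ×ˢ Finset.Icc 1 n).filter fun p =>
      p.1 < p.2 ∧ lam p.1 ≤ lam p.2).card : ℤ) +
    ∑ u ∈ desF n lam σ, (armCard n lam u : ℤ)

/-- The statistic `T(σ)`. -/
def Tstat (n : ℕ) (lam : ℕ → ℕ) (σ : ℕ × ℕ → ℕ) : ℤ :=
  coinv n lam σ -
    ∑ u ∈ (dgF n lam).filter fun u => aug σ u ≠ aug σ (dbox u), (armCard n lam u : ℤ)

/-- Antidominant composition: `λ_1 ≤ ⋯ ≤ λ_n`. -/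
def Antidominant (n : ℕ) (lam : ℕ → ℕ) : Prop :=
  ∀ i j, 1 ≤ i → i ≤ j → j ≤ n → lam i ≤ lam j

/-- Appropriate filling: non-attacking with `T(σ) = 0`. -/
def Appropriate (n : ℕ) (lam : ℕ → ℕ) (σ : ℕ × ℕ → ℕ) : Prop :=
  IsFilling n lam σ ∧ NonAttacking n lam σ ∧ Tstat n lam σ = 0

/-- The operation `π` on compositions: `π(λ) = (λ_n + 1, λ_1, …, λ_{n-1})`. -/
def piComp (n : ℕ) (lam : ℕ → ℕ) : ℕ → ℕ :=
  fun i => if i = 1 then lam n + 1 else lam (i - 1)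

/-- The operation `π` on boxes. -/
def piBox (n : ℕ) (u : ℕ × ℕ) : ℕ × ℕ :=
  if u.1 < n then (u.1 + 1, u.2) else (1, u.2 + 1)

/-- Extension by zero of a function defined on the diagram. -/
def ext (n : ℕ) (lam : ℕ → ℕ) (f : {u // u ∈ dgF n lam} → ℕ) : ℕ × ℕ → ℕ :=
  fun u => if h : u ∈ dgF n lam then f ⟨u, h⟩ else 0

/-- `qstat(σ) = Σ (l(u) + 1)` over boxes `u` with `σ̂(u) < σ̂(d(u))`. -/
def qstat (n : ℕ) (lam : ℕ → ℕ) (σ : ℕ × ℕ → ℕ) : ℕ :=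
  ∑ u ∈ (dgF n lam).filter fun u => aug σ u < aug σ (dbox u), (lam u.1 - u.2 + 1)

end CO

namespace CO

/-- The statistic `asc(τ) = Σ (l(u) + 1)` over boxes `u = (i, j)` with `j ≥ 2` and
`τ(u) < τ(d(u))`. -/
def ascStat (n : ℕ) (mu : ℕ → ℕ) (τ : ℕ × ℕ → ℕ) : ℕ :=
  ∑ u ∈ (dgF n mu).filter fun u => 2 ≤ u.2 ∧ τ u < τ (dbox u), (mu u.1 - u.2 + 1)

/-- The greedy rule (iii): for boxes in rows `≥ 2`, with `S = τ(arm(u)) ∪ {τ(u)}`,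
`τ(u)` is the minimum of `{x ∈ S : x ≥ τ(d(u))}` if nonempty, and `min S` otherwise. -/
def GreedyRule (n : ℕ) (mu : ℕ → ℕ) (τ : ℕ × ℕ → ℕ) : Prop :=
  ∀ u ∈ dgF n mu, 2 ≤ u.2 →
    (({x ∈ τ '' ↑(armF n mu u) ∪ {τ u} | τ (dbox u) ≤ x}.Nonempty →
        τ u = sInf {x ∈ τ '' ↑(armF n mu u) ∪ {τ u} | τ (dbox u) ≤ x}) ∧
      (¬ {x ∈ τ '' ↑(armF n mu u) ∪ {τ u} | τ (dbox u) ≤ x}.Nonempty →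
        τ u = sInf (τ '' ↑(armF n mu u) ∪ {τ u})))

/-- Conditions (i)–(iv) on the fillings `τ` counted by `c_a^μ(k)`. -/
def CCond (n : ℕ) (mu : ℕ → ℕ) (a : ℕ → ℕ) (k : ℕ → ℕ) (τ : ℕ × ℕ → ℕ) : Prop :=
  (∀ u ∈ dgF n mu, 1 ≤ τ u ∧ τ u ≤ n) ∧
    (∀ j, (j, 1) ∈ dgF n mu → τ (j, 1) = a j) ∧
    (∀ u ∈ dgF n mu, ∀ v ∈ dgF n mu, Attack u v → τ u ≠ τ v) ∧
    GreedyRule n mu τ ∧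
    ∀ i, 1 ≤ i → i ≤ n → ((dgF n mu).filter fun u => τ u = i).card = k i

open Classical in
/-- The coefficient `c_a^μ(k) ∈ ℤ[q]`: the generating function `Σ_τ q^{asc(τ)}`
over fillings satisfying (i)–(iv). -/
noncomputable def cCoef (n : ℕ) (mu : ℕ → ℕ) (a : ℕ → ℕ) (k : ℕ → ℕ) : Polynomial ℤ :=
  ∑ f ∈ (Fintype.piFinset fun _ : {u // u ∈ dgF n mu} => Finset.Icc 1 n).filter
      fun f => CCond n mu a k (ext n mu f),
    Polynomial.X ^ ascStat n mu (ext n mu f)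

end CO
namespace CO

/-! ### Cyclic rotation of values -/

/-- Cyclic rotation of `{1, …, n}` by `t`. -/
def rot (n t v : ℕ) : ℕ := if v ≤ n - t then v + t else v - (n - t)

lemma rot_mem {n t v : ℕ} (ht : t ≤ n) (h1 : 1 ≤ v) (h2 : v ≤ n) :
    1 ≤ rot n t v ∧ rot n t v ≤ n := by unfold rot; split_ifs <;> omega

lemma rot_cancel {n t v : ℕ} (ht : t ≤ n) (h1 : 1 ≤ v) (h2 : v ≤ n) :
    rot n (n - t) (rot n t v) = v := by unfold rot; split_ifs <;> omega

lemma rot_cancel' {n t v : ℕ} (ht : t ≤ n) (h1 : 1 ≤ v) (h2 : v ≤ n) :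
    rot n t (rot n (n - t) v) = v := by unfold rot; split_ifs <;> omega

lemma rot_inj {n t x y : ℕ} (ht : t ≤ n) (hx1 : 1 ≤ x) (hx2 : x ≤ n)
    (hy1 : 1 ≤ y) (hy2 : y ≤ n) (h : rot n t x = rot n t y) : x = y := by
  unfold rot at h; split_ifs at h <;> omega

/-- Cyclic distance starting at `d`. -/
def cdist (n d x : ℕ) : ℕ := if d ≤ x then x - d else x + n - d

lemma cdist_inj {n d x y : ℕ} (hd : d ≤ n) (hx1 : 1 ≤ x) (hx2 : x ≤ n) (hy1 : 1 ≤ y) (hy2 : y ≤ n)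
    (h : cdist n d x = cdist n d y) : x = y := by
  unfold cdist at h; split_ifs at h <;> omega

lemma cdist_rot {n t d x : ℕ} (ht : t ≤ n) (hd1 : 1 ≤ d) (hd2 : d ≤ n)
    (hx1 : 1 ≤ x) (hx2 : x ≤ n) :
    cdist n (rot n t d) (rot n t x) = cdist n d x := by
  unfold cdist rot; split_ifs <;> omega

/-! ### The greedy selection -/

open Classical in
/-- The greedy choice from `S` starting at `d`. -/
noncomputable def greedy (d : ℕ) (S : Set ℕ) : ℕ :=
  if {x ∈ S | d ≤ x}.Nonempty then sInf {x ∈ S | d ≤ x} else sInf S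

lemma greedyRule_iff (n : ℕ) (mu : ℕ → ℕ) (τ : ℕ × ℕ → ℕ) :
    GreedyRule n mu τ ↔ ∀ u ∈ dgF n mu, 2 ≤ u.2 →
      τ u = greedy (τ (dbox u)) (τ '' ↑(armF n mu u) ∪ {τ u}) := by
  unfold GreedyRule greedy
  constructor
  · intro H u hu h2
    rcases H u hu h2 with ⟨ha, hb⟩
    split_ifs with hne
    · exact ha hne
    · exact hb hne
  · intro H u hu h2
    constructor
    · intro hne; have := H u hu h2; rwa [if_pos hne] at this
    · intro hne; have := H u hu h2; rwa [if_neg hne] at this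

lemma greedy_spec {d : ℕ} {S : Set ℕ} (hne : S.Nonempty) : greedy d S ∈ S := by
  unfold greedy; split_ifs with h
  · exact (Nat.sInf_mem h).1
  · exact Nat.sInf_mem hne

lemma greedy_min {n d : ℕ} {S : Set ℕ} (hS : ∀ x ∈ S, 1 ≤ x ∧ x ≤ n)
    {y : ℕ} (hy : y ∈ S) : cdist n d (greedy d S) ≤ cdist n d y := by
  have hne : S.Nonempty := ⟨y, hy⟩
  unfold greedy; split_ifs with h
  · have hg := Nat.sInf_mem h
    have hg1 : sInf {x ∈ S | d ≤ x} ∈ S := hg.1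
    have hgd : d ≤ sInf {x ∈ S | d ≤ x} := hg.2
    have hgn := (hS _ hg1).2
    have hyn := (hS y hy).1
    by_cases hyd : d ≤ y
    · have hle : sInf {x ∈ S | d ≤ x} ≤ y := Nat.sInf_le ⟨hy, hyd⟩
      unfold cdist; split_ifs <;> omega
    · unfold cdist; split_ifs <;> omega
  · have hgS : sInf S ∈ S := Nat.sInf_mem hne
    have hgle : sInf S ≤ y := Nat.sInf_le hy
    have hgd : ¬ d ≤ sInf S := fun hc => h ⟨_, hgS, hc⟩
    have hyd : ¬ d ≤ y := fun hc => h ⟨_, hy, hc⟩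
    unfold cdist; split_ifs <;> omega

lemma greedy_eq {n d z : ℕ} {S : Set ℕ} (hd : d ≤ n) (hS : ∀ x ∈ S, 1 ≤ x ∧ x ≤ n)
    (hz : z ∈ S) (hmin : ∀ y ∈ S, cdist n d z ≤ cdist n d y) :
    greedy d S = z := by
  have hg : greedy d S ∈ S := greedy_spec ⟨z, hz⟩
  have e : cdist n d (greedy d S) = cdist n d z :=
    le_antisymm (greedy_min hS hz) (hmin _ hg)
  exact cdist_inj hd (hS _ hg).1 (hS _ hg).2 (hS _ hz).1 (hS _ hz).2 e

lemma greedy_rot {n t d : ℕ} {S : Set ℕ} (ht : t ≤ n) (hS : ∀ x ∈ S, 1 ≤ x ∧ x ≤ n)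
    (hd1 : 1 ≤ d) (hd2 : d ≤ n) (hne : S.Nonempty) :
    greedy (rot n t d) (rot n t '' S) = rot n t (greedy d S) := by
  have hS' : ∀ x ∈ rot n t '' S, 1 ≤ x ∧ x ≤ n := by
    rintro x ⟨y, hy, rfl⟩; exact rot_mem ht (hS y hy).1 (hS y hy).2
  have hgS : greedy d S ∈ S := greedy_spec hne
  refine greedy_eq (rot_mem ht hd1 hd2).2 hS' ⟨_, hgS, rfl⟩ ?_
  rintro y ⟨y0, hy0, rfl⟩
  rw [cdist_rot ht hd1 hd2 (hS _ hgS).1 (hS _ hgS).2,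
      cdist_rot ht hd1 hd2 (hS _ hy0).1 (hS _ hy0).2]
  exact greedy_min hS hy0

/-! ### Diagram lemmas -/

lemma mem_dgF {n : ℕ} {mu : ℕ → ℕ} {u : ℕ × ℕ} :
    u ∈ dgF n mu ↔ 1 ≤ u.1 ∧ u.1 ≤ n ∧ 1 ≤ u.2 ∧ u.2 ≤ mu u.1 := by
  obtain ⟨a, b⟩ := u
  unfold dgF
  simp only [Finset.mem_biUnion, Finset.mem_image, Finset.mem_Icc, Prod.mk.injEq]
  constructor
  · rintro ⟨i, ⟨h1, h2⟩, j, ⟨h3, h4⟩, rfl, rfl⟩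
    exact ⟨h1, h2, h3, h4⟩
  · rintro ⟨h1, h2, h3, h4⟩
    exact ⟨a, ⟨h1, h2⟩, b, ⟨h3, h4⟩, rfl, rfl⟩

lemma mem_augF {n : ℕ} {mu : ℕ → ℕ} {u : ℕ × ℕ} :
    u ∈ augF n mu ↔ u ∈ dgF n mu ∨ (1 ≤ u.1 ∧ u.1 ≤ n ∧ u.2 = 0) := by
  obtain ⟨a, b⟩ := u
  unfold augF
  simp only [Finset.mem_union, Finset.mem_image, Finset.mem_Icc, Prod.mk.injEq]
  constructor
  · rintro (h | ⟨i, ⟨h1, h2⟩, rfl, rfl⟩)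
    · exact Or.inl h
    · exact Or.inr ⟨h1, h2, rfl⟩
  · rintro (h | ⟨h1, h2, h3⟩)
    · exact Or.inl h
    · exact Or.inr ⟨a, ⟨h1, h2⟩, rfl, h3.symm⟩

lemma dbox_mem {n : ℕ} {mu : ℕ → ℕ} {u : ℕ × ℕ} (hu : u ∈ dgF n mu) (h2 : 2 ≤ u.2) :
    dbox u ∈ dgF n mu := by
  simp only [mem_dgF, dbox] at hu ⊢
  omega

lemma armF_subset {n : ℕ} {mu : ℕ → ℕ} {u : ℕ × ℕ} (hu : 2 ≤ u.2) :
    armF n mu u ⊆ dgF n mu := by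
  intro v hv
  unfold armF at hv
  rcases Finset.mem_union.1 hv with h | h
  · exact Finset.mem_of_mem_filter v h
  · have h1 := Finset.mem_of_mem_filter v h
    have h2 := (Finset.mem_filter.1 h).2
    rcases mem_augF.1 h1 with h3 | h3
    · exact h3
    · exfalso; omega

lemma sum_dgF {M : Type*} [AddCommMonoid M] (n : ℕ) (mu : ℕ → ℕ) (f : ℕ × ℕ → M) :
    ∑ u ∈ dgF n mu, f u = ∑ i ∈ Finset.Icc 1 n, ∑ j ∈ Finset.Icc 1 (mu i), f (i, j) := by
  unfold dgF
  rw [Finset.sum_biUnion]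
  · refine Finset.sum_congr rfl fun i _ => ?_
    rw [Finset.sum_image]
    intro x _ y _ h
    simpa using h
  · intro a _ b _ hab
    apply Finset.disjoint_left.2
    intro x hx hx'
    simp only [Finset.mem_image] at hx hx'
    obtain ⟨j, _, rfl⟩ := hx
    obtain ⟨j', _, he⟩ := hx'
    simp only [Prod.mk.injEq] at he
    exact hab he.1.symm

end CO
namespace CO

/-- Indicator of the lower cyclic block. -/
def gz (n t v : ℕ) : ℤ := if v ≤ n - t then 1 else 0

lemma telescope (c : ℤ) (h : ℕ → ℤ) (m : ℕ) :
    ∑ j ∈ Finset.Icc 2 (m + 1), (c - (j : ℤ) + 1) * (h j - h (j - 1))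
      = (c - ((m : ℤ) + 1) + 1) * h (m + 1) - c * h 1 + ∑ j ∈ Finset.Icc 1 m, h j := by
  induction m with
  | zero =>
    rw [Finset.Icc_eq_empty (by omega), Finset.Icc_eq_empty (by omega)]
    simp only [Finset.sum_empty]
    push_cast
    ring
  | succ m ih =>
    rw [Finset.sum_Icc_succ_top (by omega : 2 ≤ m + 1 + 1), ih,
      Finset.sum_Icc_succ_top (by omega : 1 ≤ m + 1)]
    simp only [Nat.add_sub_cancel]
    push_cast
    ring

lemma cast_asc (n : ℕ) (mu : ℕ → ℕ) (σ : ℕ × ℕ → ℕ) :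
    (ascStat n mu σ : ℤ) = ∑ u ∈ dgF n mu,
      (if 2 ≤ u.2 ∧ σ u < σ (dbox u) then ((mu u.1 : ℤ) - u.2 + 1) else 0) := by
  have h1 : ascStat n mu σ
      = ∑ u ∈ dgF n mu, (if 2 ≤ u.2 ∧ σ u < σ (dbox u) then (mu u.1 - u.2 + 1) else 0) := by
    unfold ascStat; rw [Finset.sum_filter]
  rw [h1, Nat.cast_sum]
  refine Finset.sum_congr rfl fun u hu => ?_
  have h4 := (mem_dgF.1 hu).2.2.2
  split_ifs <;> push_cast <;> omega

lemma asc_diff (n t : ℕ) (mu : ℕ → ℕ) (τ τ' : ℕ × ℕ → ℕ) (ht : t ≤ n)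
    (hval : ∀ u ∈ dgF n mu, 1 ≤ τ u ∧ τ u ≤ n)
    (hagree : ∀ u ∈ dgF n mu, τ' u = rot n t (τ u)) :
    (ascStat n mu τ : ℤ) - (ascStat n mu τ' : ℤ)
      = (∑ u ∈ dgF n mu, gz n t (τ u))
        - ∑ i ∈ Finset.Icc 1 n, (mu i : ℤ) * gz n t (τ (i, 1)) := by
  rw [cast_asc n mu τ, cast_asc n mu τ', ← Finset.sum_sub_distrib]
  have key : ∀ u ∈ dgF n mu,
      ((if 2 ≤ u.2 ∧ τ u < τ (dbox u) then ((mu u.1 : ℤ) - u.2 + 1) else 0)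
        - (if 2 ≤ u.2 ∧ τ' u < τ' (dbox u) then ((mu u.1 : ℤ) - u.2 + 1) else 0))
      = (if 2 ≤ u.2 then ((mu u.1 : ℤ) - u.2 + 1) * (gz n t (τ u) - gz n t (τ (dbox u)))
          else 0) := by
    intro u hu
    by_cases h2 : 2 ≤ u.2
    · have hd := dbox_mem hu h2
      have hxu := hval u hu
      have hxd := hval _ hd
      rw [hagree u hu, hagree _ hd]
      simp only [h2, true_and, if_true, gz, rot]
      split_ifs <;> first | ring1 | (exfalso; omega)
    · simp [h2]
  rw [Finset.sum_congr rfl key, sum_dgF, sum_dgF, ← Finset.sum_sub_distrib]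
  refine Finset.sum_congr rfl fun i hi => ?_
  have hcol : ∀ j : ℕ,
      (if 2 ≤ ((i, j) : ℕ × ℕ).2 then
          ((mu ((i, j) : ℕ × ℕ).1 : ℤ) - ((i, j) : ℕ × ℕ).2 + 1) *
            (gz n t (τ (i, j)) - gz n t (τ (dbox (i, j)))) else 0)
      = if 2 ≤ j then ((mu i : ℤ) - (j : ℤ) + 1) * (gz n t (τ (i, j)) - gz n t (τ (i, j - 1)))
        else 0 := fun j => rfl
  simp only [hcol]
  rcases Nat.eq_zero_or_pos (mu i) with h0 | h0
  · rw [h0]; simp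
  · obtain ⟨m, hm⟩ : ∃ m, mu i = m + 1 := ⟨mu i - 1, by omega⟩
    rw [hm]
    have hfil : (Finset.Icc 1 (m + 1)).filter (fun j => 2 ≤ j) = Finset.Icc 2 (m + 1) := by
      ext j
      simp only [Finset.mem_filter, Finset.mem_Icc]
      omega
    rw [← Finset.sum_filter, hfil, telescope (((m + 1 : ℕ) : ℤ)) (fun j => gz n t (τ (i, j))) m,
      Finset.sum_Icc_succ_top (by omega : 1 ≤ m + 1)]
    push_cast
    ring

lemma sum_gz_eq (n t : ℕ) (mu : ℕ → ℕ) (τ : ℕ × ℕ → ℕ) (kk : ℕ → ℕ)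
    (hval : ∀ u ∈ dgF n mu, 1 ≤ τ u ∧ τ u ≤ n)
    (hk : ∀ i, 1 ≤ i → i ≤ n → ((dgF n mu).filter fun u => τ u = i).card = kk i) :
    ∑ u ∈ dgF n mu, gz n t (τ u) = ∑ v ∈ Finset.Icc 1 n, gz n t v * (kk v : ℤ) := by
  classical
  rw [← Finset.sum_fiberwise_of_maps_to (g := τ) (t := Finset.Icc 1 n)
      (fun u hu => Finset.mem_Icc.2 ⟨(hval u hu).1, (hval u hu).2⟩)]
  refine Finset.sum_congr rfl fun v hv => ?_
  have hc : ∀ u ∈ (dgF n mu).filter (fun u => τ u = v), gz n t (τ u) = gz n t v :=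
    fun u hu => by rw [(Finset.mem_filter.1 hu).2]
  rw [Finset.sum_congr rfl hc, Finset.sum_const,
    hk v (Finset.mem_Icc.1 hv).1 (Finset.mem_Icc.1 hv).2, nsmul_eq_mul, mul_comm]

lemma sum_k_eq (n : ℕ) (mu : ℕ → ℕ) (τ : ℕ × ℕ → ℕ) (kk : ℕ → ℕ)
    (hval : ∀ u ∈ dgF n mu, 1 ≤ τ u ∧ τ u ≤ n)
    (hk : ∀ i, 1 ≤ i → i ≤ n → ((dgF n mu).filter fun u => τ u = i).card = kk i) :
    ∑ v ∈ Finset.Icc 1 n, kk v = ∑ i ∈ Finset.Icc 1 n, mu i := by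
  classical
  have h1 : (dgF n mu).card = ∑ v ∈ Finset.Icc 1 n, kk v := by
    rw [Finset.card_eq_sum_card_fiberwise
      (fun u hu => Finset.mem_Icc.2 ⟨(hval u hu).1, (hval u hu).2⟩)]
    exact Finset.sum_congr rfl fun v hv =>
      hk v (Finset.mem_Icc.1 hv).1 (Finset.mem_Icc.1 hv).2
  have h2 : (dgF n mu).card = ∑ i ∈ Finset.Icc 1 n, mu i := by
    rw [Finset.card_eq_sum_ones, sum_dgF n mu (fun _ => (1 : ℕ))]
    refine Finset.sum_congr rfl fun i _ => ?_
    simp [Nat.card_Icc]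
  omega

lemma ccond_transfer (n t : ℕ) (ht : t ≤ n) (mu : ℕ → ℕ) (a a' k k' : ℕ → ℕ)
    (τ τ' : ℕ × ℕ → ℕ)
    (hagree : ∀ u ∈ dgF n mu, τ' u = rot n t (τ u))
    (ha : ∀ j, (j, 1) ∈ dgF n mu → a' j = rot n t (a j))
    (hk : ∀ v, 1 ≤ v → v ≤ n → k' (rot n t v) = k v)
    (h : CCond n mu a k τ) : CCond n mu a' k' τ' := by
  classical
  obtain ⟨h1, h2, h3, h4, h5⟩ := h
  have hval' : ∀ u ∈ dgF n mu, 1 ≤ τ' u ∧ τ' u ≤ n := fun u hu => by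
    rw [hagree u hu]; exact rot_mem ht (h1 u hu).1 (h1 u hu).2
  refine ⟨hval', ?_, ?_, ?_, ?_⟩
  · intro j hj
    rw [hagree _ hj, h2 j hj]
    exact (ha j hj).symm
  · intro u hu v hv hAtt he
    rw [hagree u hu, hagree v hv] at he
    exact h3 u hu v hv hAtt
      (rot_inj ht (h1 u hu).1 (h1 u hu).2 (h1 v hv).1 (h1 v hv).2 he)
  · rw [greedyRule_iff] at h4 ⊢
    intro u hu h2u
    have harm := armF_subset (n := n) (mu := mu) (u := u) h2u
    have hdb := dbox_mem hu h2u
    have hSv : ∀ x ∈ (τ '' ↑(armF n mu u) ∪ {τ u} : Set ℕ), 1 ≤ x ∧ x ≤ n := by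
      rintro x (⟨v, hv, rfl⟩ | rfl)
      · exact h1 v (harm hv)
      · exact h1 u hu
    have hset : (τ' '' ↑(armF n mu u) ∪ {τ' u} : Set ℕ)
        = rot n t '' (τ '' ↑(armF n mu u) ∪ {τ u}) := by
      rw [Set.image_union, Set.image_image, Set.image_singleton, hagree u hu]
      congr 1
      exact Set.image_congr fun v hv => hagree v (harm hv)
    rw [hset, hagree u hu, hagree _ hdb,
      greedy_rot ht hSv (h1 _ hdb).1 (h1 _ hdb).2 ⟨τ u, Set.mem_union_right _ rfl⟩]
    exact congrArg (rot n t) (h4 u hu h2u)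
  · intro i hi1 hi2
    have hv1 := rot_mem (Nat.sub_le n t) hi1 hi2
    have hvc : rot n t (rot n (n - t) i) = i := rot_cancel' ht hi1 hi2
    have hfilt : (dgF n mu).filter (fun u => τ' u = i)
        = (dgF n mu).filter fun u => τ u = rot n (n - t) i := by
      apply Finset.filter_congr
      intro u hu
      rw [hagree u hu]
      constructor
      · intro he
        rw [← he, rot_cancel ht (h1 u hu).1 (h1 u hu).2]
      · intro he
        rw [he, hvc]
    rw [hfilt, h5 _ hv1.1 hv1.2, ← hk _ hv1.1 hv1.2, hvc]

lemma final_arith (n s r : ℕ) (hs1 : 1 ≤ s) (hsn : s ≤ n) (hr : r ≤ s)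
    (lam k nu kL : ℕ → ℕ)
    (hnu : ∀ i, nu i = if n - s + 1 ≤ i then lam i + 1 else 0)
    (hkL : ∀ v, kL v = if n - s + 1 ≤ v then k v + 1 else k v)
    (hsum : ∑ v ∈ Finset.Icc 1 n, (kL v : ℤ) = ∑ i ∈ Finset.Icc 1 n, (nu i : ℤ)) :
    (∑ v ∈ Finset.Icc 1 n, gz n r v * (kL v : ℤ))
      - ∑ i ∈ Finset.Icc 1 n, (nu i : ℤ) * gz n r i
      = (∑ j ∈ Finset.Icc (n - r + 1) n, (lam j : ℤ))
        - ∑ j ∈ Finset.Icc (n - r + 1) n, (k j : ℤ) := by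
  have hIcc : Finset.Icc 1 n = Finset.Ioc 0 n := Finset.Icc_add_one_left_eq_Ioc 0 n
  have hIcc2 : Finset.Icc (n - r + 1) n = Finset.Ioc (n - r) n := Finset.Icc_add_one_left_eq_Ioc (n - r) n
  rw [hIcc, hIcc2]
  have split1 : ∀ F : ℕ → ℤ,
      (∑ v ∈ Finset.Ioc 0 (n - r), F v) + ∑ v ∈ Finset.Ioc (n - r) n, F v
        = ∑ v ∈ Finset.Ioc 0 n, F v :=
    fun F => Finset.sum_Ioc_consecutive F (by omega) (by omega)
  have e1 : ∑ v ∈ Finset.Ioc 0 n, gz n r v * (kL v : ℤ)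
      = (∑ v ∈ Finset.Ioc 0 (n - r), (kL v : ℤ)) := by
    rw [← split1 (fun v => gz n r v * (kL v : ℤ))]
    have ea : ∑ v ∈ Finset.Ioc 0 (n - r), gz n r v * (kL v : ℤ)
        = ∑ v ∈ Finset.Ioc 0 (n - r), (kL v : ℤ) := by
      refine Finset.sum_congr rfl fun v hv => ?_
      have := Finset.mem_Ioc.1 hv
      rw [gz, if_pos (by omega), one_mul]
    have eb : ∑ v ∈ Finset.Ioc (n - r) n, gz n r v * (kL v : ℤ) = 0 := by
      refine Finset.sum_eq_zero fun v hv => ?_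
      have := Finset.mem_Ioc.1 hv
      rw [gz, if_neg (by omega), zero_mul]
    rw [ea, eb, add_zero]
  have e2 : ∑ v ∈ Finset.Ioc 0 n, (nu v : ℤ) * gz n r v
      = (∑ v ∈ Finset.Ioc 0 (n - r), (nu v : ℤ)) := by
    rw [← split1 (fun v => (nu v : ℤ) * gz n r v)]
    have ea : ∑ v ∈ Finset.Ioc 0 (n - r), (nu v : ℤ) * gz n r v
        = ∑ v ∈ Finset.Ioc 0 (n - r), (nu v : ℤ) := by
      refine Finset.sum_congr rfl fun v hv => ?_
      have := Finset.mem_Ioc.1 hv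
      rw [gz, if_pos (by omega), mul_one]
    have eb : ∑ v ∈ Finset.Ioc (n - r) n, (nu v : ℤ) * gz n r v = 0 := by
      refine Finset.sum_eq_zero fun v hv => ?_
      have := Finset.mem_Ioc.1 hv
      rw [gz, if_neg (by omega), mul_zero]
    rw [ea, eb, add_zero]
  rw [e1, e2]
  have hsum' := hsum
  rw [hIcc, ← split1 (fun v => (kL v : ℤ)), ← split1 (fun v => (nu v : ℤ))] at hsum'
  have key : ∑ v ∈ Finset.Ioc (n - r) n, ((nu v : ℤ) - (kL v : ℤ))
      = ∑ v ∈ Finset.Ioc (n - r) n, ((lam v : ℤ) - (k v : ℤ)) := by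
    refine Finset.sum_congr rfl fun v hv => ?_
    have hm := Finset.mem_Ioc.1 hv
    rw [hnu v, hkL v, if_pos (by omega), if_pos (by omega)]
    push_cast
    ring
  rw [Finset.sum_sub_distrib, Finset.sum_sub_distrib] at key
  omega

end CO

open CO in
/-- Lemma `equalityofc`. The combinatorial Knop–Sahi recurrence:
for `ν = (0, …, 0, λ_{n-s+1}+1, …, λ_n+1)` and `0 ≤ r ≤ s`,
`c^ν_{(n-s+1,…,n)}(k₁,…,k_{n-s},k_{n-s+1}+1,…,k_n+1)` equals
`q^{(λ_{n-r+1}+⋯+λ_n)-(k_{n-r+1}+⋯+k_n)}` times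
`c^ν_{(n-s+r+1,…,n,1,…,r)}(k_{n-r+1}+1,…,k_n+1,k₁,…,k_{n-s},k_{n-s+1}+1,…,k_{n-r}+1)`,
as Laurent polynomials in `q`. -/
theorem c_knop_sahi (n : ℕ) (hn : 1 ≤ n) (lam : ℕ → ℕ) (hanti : Antidominant n lam)
    (s : ℕ) (hs1 : 1 ≤ s) (hsn : s ≤ n)
    (hzero : ∀ i, 1 ≤ i → i ≤ n - s → lam i = 0) (hpos : 1 ≤ lam (n - s + 1))
    (nu : ℕ → ℕ) (hnu : nu = fun i => if n - s + 1 ≤ i then lam i + 1 else 0)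
    (r : ℕ) (hr : r ≤ s) (k : ℕ → ℕ) :
    Polynomial.toLaurent
        (cCoef n nu (fun j => j) fun i => if n - s + 1 ≤ i then k i + 1 else k i)
      = LaurentPolynomial.T
          ((∑ j ∈ Finset.Icc (n - r + 1) n, (lam j : ℤ)) -
            ∑ j ∈ Finset.Icc (n - r + 1) n, (k j : ℤ)) *
        Polynomial.toLaurent
          (cCoef n nu (fun j => if j ≤ n - r then j + r else j - (n - r))
            fun i => if i ≤ r then k (n - r + i) + 1
              else if n - s + r + 1 ≤ i then k (i - r) + 1 else k (i - r)) := by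

  classical
  have hrn : r ≤ n := hr.trans hsn
  have hnui : ∀ i, nu i = if n - s + 1 ≤ i then lam i + 1 else 0 := fun i => by rw [hnu]
  have hagree_gen : ∀ (t' : ℕ) (f : {u // u ∈ dgF n nu} → ℕ), ∀ u ∈ dgF n nu,
      CO.ext n nu (fun x => rot n t' (f x)) u = rot n t' (CO.ext n nu f u) := by
    intro t' f u hu
    simp only [CO.ext, dif_pos hu]
  have hkLR : ∀ v, 1 ≤ v → v ≤ n →
      (if rot n r v ≤ r then k (n - r + rot n r v) + 1
        else if n - s + r + 1 ≤ rot n r v then k (rot n r v - r) + 1 else k (rot n r v - r))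
      = (if n - s + 1 ≤ v then k v + 1 else k v) := by
    intro v h1 h2
    by_cases hv : v ≤ n - r
    · have hrot : rot n r v = v + r := by simp [rot, hv]
      rw [hrot, if_neg (by omega)]
      have hvv : v + r - r = v := by omega
      rw [hvv]
      by_cases h3 : n - s + 1 ≤ v
      · rw [if_pos (by omega), if_pos h3]
      · rw [if_neg (by omega), if_neg h3]
    · have hrot : rot n r v = v - (n - r) := by simp [rot, hv]
      rw [hrot, if_pos (by omega)]
      have hvv : n - r + (v - (n - r)) = v := by omega
      rw [hvv, if_pos (by omega)]
  have hkRL : ∀ v, 1 ≤ v → v ≤ n →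
      (if n - s + 1 ≤ rot n (n - r) v then k (rot n (n - r) v) + 1 else k (rot n (n - r) v))
      = (if v ≤ r then k (n - r + v) + 1
          else if n - s + r + 1 ≤ v then k (v - r) + 1 else k (v - r)) := by
    intro v h1 h2
    have hw := rot_mem (Nat.sub_le n r) h1 h2
    have h3 := hkLR _ hw.1 hw.2
    rw [rot_cancel' hrn h1 h2] at h3
    exact h3.symm
  unfold cCoef
  rw [map_sum, map_sum, Finset.mul_sum]
  simp only [Polynomial.toLaurent_X_pow, ← LaurentPolynomial.T_add]
  refine Finset.sum_nbij' (fun f x => rot n r (f x)) (fun g x => rot n (n - r) (g x))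
    ?_ ?_ ?_ ?_ ?_
  · intro f hf
    rw [Finset.mem_filter] at hf ⊢
    obtain ⟨hfp, hfc⟩ := hf
    have hfb : ∀ x, 1 ≤ f x ∧ f x ≤ n := fun x =>
      Finset.mem_Icc.1 (Fintype.mem_piFinset.1 hfp x)
    refine ⟨Fintype.mem_piFinset.2 fun x =>
      Finset.mem_Icc.2 (rot_mem hrn (hfb x).1 (hfb x).2), ?_⟩
    refine ccond_transfer n r hrn nu (fun j => j) _ _ _ (CO.ext n nu f) _
      (hagree_gen r f) ?_ hkLR hfc
    intro j _
    simp only [rot]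
  · intro g hg
    rw [Finset.mem_filter] at hg ⊢
    obtain ⟨hgp, hgc⟩ := hg
    have hgb : ∀ x, 1 ≤ g x ∧ g x ≤ n := fun x =>
      Finset.mem_Icc.1 (Fintype.mem_piFinset.1 hgp x)
    refine ⟨Fintype.mem_piFinset.2 fun x =>
      Finset.mem_Icc.2 (rot_mem (Nat.sub_le n r) (hgb x).1 (hgb x).2), ?_⟩
    refine ccond_transfer n (n - r) (Nat.sub_le n r) nu
      (fun j => if j ≤ n - r then j + r else j - (n - r)) _ _ _ (CO.ext n nu g) _
      (hagree_gen (n - r) g) ?_ hkRL hgc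
    intro j hj
    have hjb := mem_dgF.1 hj
    show (j : ℕ) = rot n (n - r) (rot n r j)
    exact (rot_cancel hrn hjb.1 hjb.2.1).symm
  · intro f hf
    rw [Finset.mem_filter] at hf
    have hfb : ∀ x, 1 ≤ f x ∧ f x ≤ n := fun x =>
      Finset.mem_Icc.1 (Fintype.mem_piFinset.1 hf.1 x)
    funext x
    exact rot_cancel hrn (hfb x).1 (hfb x).2
  · intro g hg
    rw [Finset.mem_filter] at hg
    have hgb : ∀ x, 1 ≤ g x ∧ g x ≤ n := fun x =>
      Finset.mem_Icc.1 (Fintype.mem_piFinset.1 hg.1 x)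
    funext x
    exact rot_cancel' hrn (hgb x).1 (hgb x).2
  · intro f hf
    rw [Finset.mem_filter] at hf
    obtain ⟨hfp, hfc⟩ := hf
    obtain ⟨h1, h2, h3, h4, h5⟩ := hfc
    have hagree := hagree_gen r f
    have d1 := asc_diff n r nu (CO.ext n nu f) (CO.ext n nu fun x => rot n r (f x)) hrn h1 hagree
    have d2 := sum_gz_eq n r nu (CO.ext n nu f)
      (fun i => if n - s + 1 ≤ i then k i + 1 else k i) h1 h5
    have d3 := sum_k_eq n nu (CO.ext n nu f)
      (fun i => if n - s + 1 ≤ i then k i + 1 else k i) h1 h5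
    have d3' : ∑ v ∈ Finset.Icc 1 n,
        (((if n - s + 1 ≤ v then k v + 1 else k v) : ℕ) : ℤ)
        = ∑ i ∈ Finset.Icc 1 n, (nu i : ℤ) := by exact_mod_cast d3
    have d4 : ∑ i ∈ Finset.Icc 1 n, (nu i : ℤ) * gz n r (CO.ext n nu f (i, 1))
        = ∑ i ∈ Finset.Icc 1 n, (nu i : ℤ) * gz n r i := by
      refine Finset.sum_congr rfl fun i hi => ?_
      rcases Nat.eq_zero_or_pos (nu i) with h0 | h0
      · rw [h0]; simp
      · have hmem : ((i, 1) : ℕ × ℕ) ∈ dgF n nu :=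
          mem_dgF.2 ⟨(Finset.mem_Icc.1 hi).1, (Finset.mem_Icc.1 hi).2, le_refl 1, h0⟩
        rw [h2 i hmem]
    have d5 := final_arith n s r hs1 hsn hr lam k nu
      (fun i => if n - s + 1 ≤ i then k i + 1 else k i) hnui (fun v => rfl) d3'
    have e : (ascStat n nu (CO.ext n nu f) : ℤ)
        = ((∑ j ∈ Finset.Icc (n - r + 1) n, (lam j : ℤ))
            - ∑ j ∈ Finset.Icc (n - r + 1) n, (k j : ℤ))
          + (ascStat n nu (CO.ext n nu fun x => rot n r (f x)) : ℤ) := by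
      linarith [d1, d2, d4, d5]
    rw [e]
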